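/- arXiv:1810.07329 — 16 statements merged into one kernel-verified Lean document; each statement's English description precedes it below -/
import Mathlib

section
/- In the ring of formal power series in z with coefficients in ℤ[x], the following two identities hold: (1 − (1+x+x²)z + x²z²) · ∑_{m≥0} A_m(x) z^m = 1 − x z², and (1 − (1+x+x²)z + x²z²) · ( ∑_{m≥0} B_m(x) z^m − x ) = 1 + x³ z. -/
open Polynomial

/-- The rank generating function polynomials `A m` of the matchable Lucas cubes `Ω_{2m}`. -/
noncomputable def A : ℕ → Polynomial ℤ
  | 0 => 1
  | 1 => 1 + X + X ^ 2
  | 2 => 1 + X + 2 * X ^ 2 + 2 * X ^ 3 + X ^ 4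
  | (m + 3) => (1 + X + X ^ 2) * A (m + 2) - X ^ 2 * A (m + 1)

/-- The rank generating function polynomials `B m` of the matchable Lucas cubes `Ω_{2m+1}`. -/
noncomputable def B : ℕ → Polynomial ℤ
  | 0 => 1 + X
  | 1 => 1 + X + X ^ 2 + X ^ 3
  | 2 => 1 + 2 * X + 2 * X ^ 2 + 3 * X ^ 3 + 2 * X ^ 4 + X ^ 5
  | (m + 3) => (1 + X + X ^ 2) * B (m + 2) - X ^ 2 * B (m + 1)

namespace PowerSeries

theorem mul_mk_of_linear_recurrence {R : Type*} [CommRing R] (p q : R) (a : ℕ → R)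
    (h : ∀ n, a (n + 3) = p * a (n + 2) - q * a (n + 1)) :
    (1 - C p * X + C q * X ^ 2) * mk a =
      C (a 0) + C (a 1 - p * a 0) * X + C (a 2 - p * a 1 + q * a 0) * X ^ 2 := by
  have hexpand : (1 - C p * X + C q * X ^ 2) * mk a =
      mk a - C p * (X * mk a) + C q * (X ^ 2 * mk a) := by
    ring
  rw [hexpand]
  ext (_ | _ | _ | n) <;> simp [coeff_X_pow_mul', coeff_mul_X_pow', coeff_succ_X_mul, h]

end PowerSeries

theorem generating_functions_of_A_and_B :
    (1 - PowerSeries.C (R := Polynomial ℤ) (1 + X + X ^ 2) * PowerSeries.X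
        + PowerSeries.C (R := Polynomial ℤ) (X ^ 2) * PowerSeries.X ^ 2) * PowerSeries.mk A
      = 1 - PowerSeries.C (R := Polynomial ℤ) X * PowerSeries.X ^ 2 ∧
    (1 - PowerSeries.C (R := Polynomial ℤ) (1 + X + X ^ 2) * PowerSeries.X
        + PowerSeries.C (R := Polynomial ℤ) (X ^ 2) * PowerSeries.X ^ 2)
        * (PowerSeries.mk B - PowerSeries.C (R := Polynomial ℤ) X)
      = 1 + PowerSeries.C (R := Polynomial ℤ) (X ^ 3) * PowerSeries.X := by
  constructor
  · rw [PowerSeries.mul_mk_of_linear_recurrence _ _ A fun _ => rfl]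
    have coeff_z : A 1 - (1 + X + X ^ 2) * A 0 = 0 := by simp [A]
    have coeff_z_sq : A 2 - (1 + X + X ^ 2) * A 1 + X ^ 2 * A 0 = -X := by simp [A]; ring
    rw [coeff_z, coeff_z_sq, A]
    simp only [map_one, map_zero, map_neg]
    ring
  · rw [mul_sub, PowerSeries.mul_mk_of_linear_recurrence _ _ B fun _ => rfl]
    have coeff_z : B 1 - (1 + X + X ^ 2) * B 0 = -X - X ^ 2 := by simp [B]; ring
    have coeff_z_sq : B 2 - (1 + X + X ^ 2) * B 1 + X ^ 2 * B 0 = X ^ 3 := by simp [B]; ring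
    rw [coeff_z, coeff_z_sq, B]
    simp only [map_add, map_sub, map_neg, map_pow, map_one]
    ring
end

section
/- Let u = (1+x+x²)/(2x) in the field ℚ(x) of rational functions over ℚ, and let U_m denote the m-th Chebyshev polynomial of the second kind (U_0 = 1, U_1 = 2x, U_m = 2x·U_{m−1} − U_{m−2}). Then for every m ≥ 1, as identities in ℚ(x): A_m(x) = x^{m−1}(1+x)·U_m(u) − x^{m−2}(1+x+x²)·U_{m−1}(u), and B_m(x) = x^m·U_m(u) + x^{m+2}·U_{m−1}(u). -/
open Polynomial

noncomputable def x : RatFunc ℚ := RatFunc.X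

/-- `u = (1+x+x²)/(2x)` in the field `ℚ(x)`. -/
noncomputable def u : RatFunc ℚ := (1 + x + x ^ 2) / (2 * x)

/-!
With `2xu = 1 + x + x²`, the Chebyshev recurrence `U_{k+2}(u) = 2u U_{k+1}(u) - U_k(u)`, multiplied
by `x^{k+2}`, says that `F_k = x^k U_k(u)` satisfies `F_{k+2} = (1 + x + x²) F_{k+1} - x² F_k`,
which is the recurrence of `A` and `B`. Hence both sides of each identity solve the same
second-order recurrence in `m`, and it suffices to compare them at `m = 1, 2`.
-/

noncomputable def scaledChebyshevU {R : Type*} [CommRing R] (t w : R) (k : ℕ) : R :=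
  t ^ k * (Chebyshev.U R k).eval w

theorem scaledChebyshevU_add_two {R : Type*} [CommRing R] (t w : R) (k : ℕ) :
    scaledChebyshevU t w (k + 2)
      = 2 * t * w * scaledChebyshevU t w (k + 1) - t ^ 2 * scaledChebyshevU t w k := by
  simp only [scaledChebyshevU, Nat.cast_add, Nat.cast_ofNat, Nat.cast_one, Chebyshev.U_add_two,
    eval_sub, eval_mul, eval_ofNat, eval_X]
  ring

theorem x_ne_zero : x ≠ 0 := RatFunc.X_ne_zero

theorem two_mul_x_mul_u : 2 * x * u = 1 + x + x ^ 2 := by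
  rw [u, mul_div_cancel₀]
  exact mul_ne_zero two_ne_zero x_ne_zero

local notation "F" => scaledChebyshevU x u

theorem scaledChebyshevU_x_u_add_two (k : ℕ) :
    F (k + 2) = (1 + x + x ^ 2) * F (k + 1) - x ^ 2 * F k := by
  rw [scaledChebyshevU_add_two, two_mul_x_mul_u]

theorem scaledChebyshevU_x_u_zero : F 0 = 1 := by
  simp [scaledChebyshevU]

theorem scaledChebyshevU_x_u_one : F 1 = 1 + x + x ^ 2 := by
  simp only [scaledChebyshevU, Nat.cast_one, Chebyshev.U_one, eval_mul, eval_ofNat, eval_X, pow_one]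
  linear_combination two_mul_x_mul_u

theorem aeval_A_add_three (k : ℕ) :
    aeval x (A (k + 3)) = (1 + x + x ^ 2) * aeval x (A (k + 2)) - x ^ 2 * aeval x (A (k + 1)) := by
  rw [A]
  simp only [map_sub, map_mul, map_add, map_one, map_pow, aeval_X]

theorem aeval_B_add_three (k : ℕ) :
    aeval x (B (k + 3)) = (1 + x + x ^ 2) * aeval x (B (k + 2)) - x ^ 2 * aeval x (B (k + 1)) := by
  rw [B]
  simp only [map_sub, map_mul, map_add, map_one, map_pow, aeval_X]

theorem aeval_A_eq (k : ℕ) :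
    aeval x (A (k + 1)) = x⁻¹ * ((1 + x) * F (k + 1) - (1 + x + x ^ 2) * F k) := by
  induction k using Nat.twoStepInduction with
  | zero =>
    rw [A, scaledChebyshevU_x_u_one, scaledChebyshevU_x_u_zero]
    simp only [map_add, map_pow, map_one, aeval_X]
    field_simp [x_ne_zero]
    ring
  | one =>
    rw [A, scaledChebyshevU_x_u_add_two, scaledChebyshevU_x_u_one, scaledChebyshevU_x_u_zero]
    simp only [map_add, map_mul, map_pow, map_one, map_ofNat, aeval_X]
    field_simp [x_ne_zero]
    ring
  | more k ih₀ ih₁ =>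
    rw [aeval_A_add_three, ih₁, ih₀, scaledChebyshevU_x_u_add_two (k + 1),
      scaledChebyshevU_x_u_add_two k]
    ring

theorem aeval_B_eq (k : ℕ) : aeval x (B (k + 1)) = F (k + 1) + x ^ 3 * F k := by
  induction k using Nat.twoStepInduction with
  | zero =>
    rw [B, scaledChebyshevU_x_u_one, scaledChebyshevU_x_u_zero]
    simp only [map_add, map_pow, map_one, aeval_X]
    ring
  | one =>
    rw [B, scaledChebyshevU_x_u_add_two, scaledChebyshevU_x_u_one, scaledChebyshevU_x_u_zero]
    simp only [map_add, map_mul, map_pow, map_one, map_ofNat, aeval_X]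
    ring
  | more k ih₀ ih₁ =>
    rw [aeval_B_add_three, ih₁, ih₀, scaledChebyshevU_x_u_add_two (k + 1),
      scaledChebyshevU_x_u_add_two k]
    ring

theorem A_B_via_Chebyshev (m : ℕ) (hm : 1 ≤ m) :
    (Polynomial.aeval x (A m)
        = x ^ ((m : ℤ) - 1) * (1 + x) * Polynomial.eval u (Polynomial.Chebyshev.U (RatFunc ℚ) m)
          - x ^ ((m : ℤ) - 2) * (1 + x + x ^ 2)
            * Polynomial.eval u (Polynomial.Chebyshev.U (RatFunc ℚ) ((m : ℤ) - 1))) ∧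
    (Polynomial.aeval x (B m)
        = x ^ (m : ℤ) * Polynomial.eval u (Polynomial.Chebyshev.U (RatFunc ℚ) m)
          + x ^ ((m : ℤ) + 2)
            * Polynomial.eval u (Polynomial.Chebyshev.U (RatFunc ℚ) ((m : ℤ) - 1))) := by
  obtain ⟨k, rfl⟩ := Nat.exists_eq_add_of_le' hm
  rw [aeval_A_eq, aeval_B_eq]
  simp only [scaledChebyshevU]
  push_cast
  simp only [add_sub_cancel_right, zpow_add₀ x_ne_zero, zpow_sub₀ x_ne_zero, zpow_natCast,
    zpow_ofNat]
  constructor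
  · field_simp [x_ne_zero]
    ring
  · ring
end

section
/- For every m ≥ 1 and every k ≥ 0, the coefficient of x^k in A_m(x) equals ∑_{j=0}^{⌊m/2⌋} (−1)^j · C(m−j, j) · T(m−2j, k−2j) + ∑_{j=1}^{⌊m/2⌋} (−1)^j · C(m−j−1, j−1) · T(m−2j, k−2j+1), where C(a,b) is the binomial coefficient and T(n,i) denotes the coefficient of x^i in (1+x+x²)^n, with the convention that C(a,b) = 0 and T(n,i) = 0 whenever b < 0 or i < 0. -/
open Polynomial Finset

/-- `C a b` : binomial coefficient with the convention `C a b = 0` for `b < 0`. -/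
def C (a : ℕ) (b : ℤ) : ℤ := if 0 ≤ b then (a.choose b.toNat : ℤ) else 0

/-- `T n i` : the coefficient of `x^i` in `(1+x+x²)^n`, with `T n i = 0` for `i < 0`. -/
noncomputable def T (n : ℕ) (i : ℤ) : ℤ :=
  if 0 ≤ i then ((1 + X + X ^ 2 : Polynomial ℤ) ^ n).coeff i.toNat else 0

noncomputable def Pp : Polynomial ℤ := 1 + X + X ^ 2

noncomputable def S1 (m : ℕ) : Polynomial ℤ :=
  ∑ j ∈ range (m+1), Polynomial.C ((-1)^j * ((m - j).choose j : ℤ)) * (Pp ^ (m - 2*j) * X ^ (2*j))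

noncomputable def S2 (m : ℕ) : Polynomial ℤ :=
  ∑ i ∈ range m, Polynomial.C ((-1)^(i+1) * ((m - i - 2).choose i : ℤ)) * (Pp ^ (m - 2*(i+1)) * X ^ (2*i+1))

lemma cast_choose_zero {a b : ℕ} (h : a < b) : ((a.choose b : ℕ) : ℤ) = 0 := by
  simp [Nat.choose_eq_zero_of_lt h]

lemma S1_rec (m : ℕ) : S1 (m+2) = Pp * S1 (m+1) - X^2 * S1 m := by
  have hP : Pp * S1 (m+1)
      = ∑ j ∈ range (m+3), Polynomial.C ((-1)^j * ((m+1 - j).choose j : ℤ)) * (Pp ^ (m+2 - 2*j) * X ^ (2*j)) := by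
    rw [S1, Finset.mul_sum, Finset.sum_range_succ (n := m+2),
      cast_choose_zero (show m+1 - (m+2) < m+2 by omega)]
    simp only [mul_zero, map_zero, zero_mul, add_zero]
    apply Finset.sum_congr rfl
    intro j hj
    by_cases h : 2*j ≤ m+1
    · rw [show m+2 - 2*j = (m+1 - 2*j) + 1 from by omega, pow_succ]; ring
    · rw [cast_choose_zero (show m+1 - j < j by omega)]; simp
  have hX : X^2 * S1 m
      = ∑ i ∈ range (m+2), Polynomial.C ((-1)^i * ((m - i).choose i : ℤ)) * (Pp ^ (m+2 - 2*(i+1)) * X ^ (2*(i+1))) := by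
    rw [S1, Finset.mul_sum, Finset.sum_range_succ (n := m+1),
      cast_choose_zero (show m - (m+1) < m+1 by omega)]
    simp only [mul_zero, map_zero, zero_mul, add_zero]
    apply Finset.sum_congr rfl
    intro i hi
    by_cases h : 2*i ≤ m
    · rw [show m - 2*i = m+2 - 2*(i+1) from by omega, show 2*(i+1) = 2*i + 2 from by ring, pow_add]
      ring
    · rw [cast_choose_zero (show m - i < i by omega)]; simp
  rw [hP, hX, S1, show (m+2+1) = m+3 from rfl]
  have key : ∀ j ∈ range (m+3),
      Polynomial.C ((-1)^j * ((m+2 - j).choose j : ℤ)) * (Pp ^ (m+2 - 2*j) * X ^ (2*j))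
      = (Polynomial.C ((-1)^j * ((m+1 - j).choose j : ℤ)) * (Pp ^ (m+2 - 2*j) * X ^ (2*j))
        - (if j = 0 then 0 else Polynomial.C ((-1)^(j-1) * ((m - (j-1)).choose (j-1) : ℤ)) * (Pp ^ (m+2 - 2*((j-1)+1)) * X ^ (2*((j-1)+1))))) := by
    intro j hj
    rcases j with _ | i
    · simp
    · simp only [Nat.add_sub_cancel, if_neg (Nat.succ_ne_zero i)]
      by_cases h : i + 1 ≤ m + 1
      · have hpas : ((m+2 - (i+1)).choose (i+1) : ℤ)
            = ((m+1 - (i+1)).choose (i+1) : ℤ) + ((m - i).choose i : ℤ) := by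
          rw [show m+2 - (i+1) = (m+1 - (i+1)) + 1 from by omega, Nat.choose_succ_succ,
            show m+1 - (i+1) = m - i from by omega]
          push_cast; ring
        rw [hpas]
        simp only [map_mul, map_add, map_pow, map_neg, map_one]
        ring
      · rw [cast_choose_zero (show m+2 - (i+1) < i+1 by omega),
          cast_choose_zero (show m+1 - (i+1) < i+1 by omega),
          cast_choose_zero (show m - i < i by omega)]
        simp
  rw [Finset.sum_congr rfl key, Finset.sum_sub_distrib]
  congr 1
  rw [Finset.sum_range_succ' _ (m+2)]
  simp

lemma S2_rec (m : ℕ) (hm : 2 ≤ m) : S2 (m+2) = Pp * S2 (m+1) - X^2 * S2 m := by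
  have hP : Pp * S2 (m+1)
      = ∑ i ∈ range (m+2), Polynomial.C ((-1)^(i+1) * ((m+1 - i - 2).choose i : ℤ)) * (Pp ^ (m+2 - 2*(i+1)) * X ^ (2*i+1)) := by
    rw [S2, Finset.mul_sum, Finset.sum_range_succ (n := m+1),
      cast_choose_zero (show m+1 - (m+1) - 2 < m+1 by omega)]
    simp only [mul_zero, map_zero, zero_mul, add_zero]
    apply Finset.sum_congr rfl
    intro i hi
    by_cases h : 2*(i+1) ≤ m+1
    · rw [show m+2 - 2*(i+1) = (m+1 - 2*(i+1)) + 1 from by omega, pow_succ]; ring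
    · rw [cast_choose_zero (show m+1 - i - 2 < i by omega)]; simp
  have hX : X^2 * S2 m
      = ∑ i ∈ range (m+1), Polynomial.C ((-1)^(i+1) * ((m - i - 2).choose i : ℤ)) * (Pp ^ (m+2 - 2*((i+1)+1)) * X ^ (2*(i+1)+1)) := by
    rw [S2, Finset.mul_sum, Finset.sum_range_succ (n := m),
      cast_choose_zero (show m - m - 2 < m by omega)]
    simp only [mul_zero, map_zero, zero_mul, add_zero]
    apply Finset.sum_congr rfl
    intro i hi
    by_cases h : 2*(i+1) ≤ m
    · rw [show m - 2*(i+1) = m+2 - 2*((i+1)+1) from by omega,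
        show 2*(i+1)+1 = (2*i+1) + 2 from by ring, pow_add]
      ring
    · rw [cast_choose_zero (show m - i - 2 < i by omega)]; simp
  rw [hP, hX, S2]
  have key : ∀ i ∈ range (m+2),
      Polynomial.C ((-1)^(i+1) * ((m+2 - i - 2).choose i : ℤ)) * (Pp ^ (m+2 - 2*(i+1)) * X ^ (2*i+1))
      = (Polynomial.C ((-1)^(i+1) * ((m+1 - i - 2).choose i : ℤ)) * (Pp ^ (m+2 - 2*(i+1)) * X ^ (2*i+1))
        - (if i = 0 then 0 else Polynomial.C ((-1)^((i-1)+1) * ((m - (i-1) - 2).choose (i-1) : ℤ)) * (Pp ^ (m+2 - 2*(((i-1)+1)+1)) * X ^ (2*((i-1)+1)+1)))) := by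
    intro i hi
    rcases i with _ | i'
    · norm_num
    · simp only [Nat.add_sub_cancel, if_neg (Nat.succ_ne_zero i')]
      by_cases h : i' + 1 ≤ m - 1
      · have hpas : ((m+2 - (i'+1) - 2).choose (i'+1) : ℤ)
            = ((m+1 - (i'+1) - 2).choose (i'+1) : ℤ) + ((m - i' - 2).choose i' : ℤ) := by
          rw [show m+2 - (i'+1) - 2 = (m+1 - (i'+1) - 2) + 1 from by omega, Nat.choose_succ_succ,
            show m+1 - (i'+1) - 2 = m - i' - 2 from by omega]
          push_cast; ring
        rw [hpas]
        simp only [map_mul, map_add, map_pow, map_neg, map_one]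
        ring
      · rw [cast_choose_zero (show m+2 - (i'+1) - 2 < i'+1 by omega),
          cast_choose_zero (show m+1 - (i'+1) - 2 < i'+1 by omega),
          cast_choose_zero (show m - i' - 2 < i' by omega)]
        simp
  rw [Finset.sum_congr rfl key, Finset.sum_sub_distrib]
  congr 1
  rw [Finset.sum_range_succ' _ (m+1)]
  simp

lemma base2 : A 2 = S1 2 + S2 2 := by
  rw [S1, S2]
  simp [Finset.sum_range_succ, Pp, A]
  ring

lemma base3 : A 3 = S1 3 + S2 3 := by
  have hA3 : A 3 = (1 + X + X ^ 2) * A 2 - X ^ 2 * A 1 := A.eq_4 0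
  rw [hA3, S1, S2]
  simp [Finset.sum_range_succ, Pp, A]
  ring

lemma A_eq : ∀ m : ℕ, A (m+2) = S1 (m+2) + S2 (m+2) := by
  intro m
  induction m using Nat.strong_induction_on with
  | _ m ih =>
    match m with
    | 0 => exact base2
    | 1 => exact base3
    | (n+2) =>
      have h1 := ih (n+1) (by omega)
      have h0 := ih n (by omega)
      have hA : A (n+2+2) = Pp * A (n+2+1) - X^2 * A (n+2) := A.eq_4 (n+1)
      rw [hA, h1, h0, S1_rec (n+2), S2_rec (n+2) (by omega)]
      ring

lemma coeff_S1 (m k : ℕ) :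
    (S1 m).coeff k = ∑ j ∈ range (m+1),
      (-1:ℤ)^j * ((m - j).choose j : ℤ) * (if 2*j ≤ k then (Pp^(m - 2*j)).coeff (k - 2*j) else 0) := by
  rw [S1, Polynomial.finset_sum_coeff]
  apply Finset.sum_congr rfl
  intro j hj
  rw [← mul_assoc, Polynomial.coeff_mul_X_pow']
  split_ifs with h
  · rw [Polynomial.coeff_C_mul, mul_assoc]
  · simp

lemma coeff_S2 (m k : ℕ) :
    (S2 m).coeff k = ∑ i ∈ range m,
      (-1:ℤ)^(i+1) * ((m - i - 2).choose i : ℤ) * (if 2*i+1 ≤ k then (Pp^(m - 2*(i+1))).coeff (k - (2*i+1)) else 0) := by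
  rw [S2, Polynomial.finset_sum_coeff]
  apply Finset.sum_congr rfl
  intro i hi
  rw [← mul_assoc, Polynomial.coeff_mul_X_pow']
  split_ifs with h
  · rw [Polynomial.coeff_C_mul, mul_assoc]
  · simp

lemma C_eval' (a : ℕ) (b : ℤ) (h : 0 ≤ b) : _root_.C a b = (a.choose b.toNat : ℤ) :=
  if_pos h

lemma C_eval (a b : ℕ) : _root_.C a (b : ℤ) = (a.choose b : ℤ) := by
  rw [C_eval' a _ (by positivity), Int.toNat_natCast]

theorem coeff_A (m : ℕ) (hm : 1 ≤ m) (k : ℕ) :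
    (A m).coeff k
      = ∑ j ∈ Finset.range (m / 2 + 1),
          (-1 : ℤ) ^ j * C (m - j) (j : ℤ) * T (m - 2 * j) ((k : ℤ) - 2 * j)
        + ∑ j ∈ Finset.Icc 1 (m / 2),
            (-1 : ℤ) ^ j * C (m - j - 1) ((j : ℤ) - 1) * T (m - 2 * j) ((k : ℤ) - 2 * j + 1) := by
  rcases Nat.lt_or_ge m 2 with hlt | hge
  · interval_cases m
    norm_num
    rw [show _root_.C 1 0 = 1 from by rw [C_eval' _ _ le_rfl]; rfl,
      T, if_pos (show (0:ℤ) ≤ (k:ℤ) by positivity), Int.toNat_natCast, pow_one, one_mul]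
    rfl
  · have hA : A m = S1 m + S2 m := by
      obtain ⟨n, rfl⟩ : ∃ n, m = n + 2 := ⟨m - 2, by omega⟩
      exact A_eq n
    rw [hA, Polynomial.coeff_add, coeff_S1, coeff_S2]
    congr 1
    · rw [Finset.sum_subset (Finset.range_subset_range.2 (show m/2+1 ≤ m+1 by omega))
        (fun j hj hj' => ?_)]
      · apply Finset.sum_congr rfl
        intro j hj
        rw [C_eval]
        by_cases h : 2*j ≤ k
        · rw [if_pos h, T, if_pos (show (0:ℤ) ≤ (k:ℤ) - 2*(j:ℤ) by omega),
            show (k:ℤ) - 2*(j:ℤ) = ((k - 2*j : ℕ) : ℤ) from by omega, Int.toNat_natCast]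
          rfl
        · rw [if_neg h, T, if_neg (show ¬ (0:ℤ) ≤ (k:ℤ) - 2*(j:ℤ) by omega), mul_zero]
      · have hjm : j < m + 1 := Finset.mem_range.1 hj
        have hj2 : m < 2*j := by
          rcases Nat.lt_or_ge j (m/2+1) with h | h
          · exact absurd (Finset.mem_range.2 h) hj'
          · omega
        rw [C_eval, cast_choose_zero (show m - j < j by omega)]
        ring
    · rw [Finset.sum_subset (Finset.Icc_subset_Icc_right (show m/2 ≤ m by omega))
        (fun j hj hj' => ?_)]
      · rw [← Finset.Ico_add_one_right_eq_Icc, Finset.sum_Ico_eq_sum_range]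
        rw [show m+1-1 = m from rfl]
        apply Finset.sum_congr rfl
        intro i hi
        have hC : _root_.C (m - (1+i) - 1) (((1+i : ℕ) : ℤ) - 1) = ((m - i - 2).choose i : ℤ) := by
          rw [show (((1+i:ℕ)):ℤ) - 1 = ((i:ℕ):ℤ) from by push_cast; ring, C_eval,
            show m - (1+i) - 1 = m - i - 2 from by omega]
        rw [hC]
        by_cases h : 2*i+1 ≤ k
        · have hT : T (m - 2*(1+i)) ((k:ℤ) - 2*((1+i:ℕ):ℤ) + 1) = (Pp^(m - 2*(i+1))).coeff (k - (2*i+1)) := by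
            rw [T, if_pos (by omega),
              show ((k:ℤ) - 2*((1+i:ℕ):ℤ) + 1) = ((k - (2*i+1) : ℕ) : ℤ) from by push_cast; omega,
              Int.toNat_natCast, show m - 2*(1+i) = m - 2*(i+1) from by omega]
            rfl
          rw [hT, if_pos h]
          ring
        · rw [if_neg h, T, if_neg (show ¬ (0:ℤ) ≤ (k:ℤ) - 2*((1+i:ℕ):ℤ) + 1 by omega)]
          ring
      · simp only [Finset.mem_Icc] at hj hj'
        have hj2 : 2 ≤ j := by omega
        have : _root_.C (m - j - 1) ((j:ℤ) - 1) = 0 := by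
          rw [show ((j:ℤ) - 1) = ((j - 1 : ℕ) : ℤ) from by omega, C_eval,
            cast_choose_zero (show m - j - 1 < j - 1 by omega)]
        rw [this]
        ring
end

section
/- Define the rank generating functions R_n(x) of the matchable Lucas cubes by R_{2m}(x) = A_m(x) and R_{2m+1}(x) = B_m(x). Then in the ring of formal power series in y with coefficients in ℤ[x]: (1 − (1+x+x²)y² + x²y⁴) · ( ∑_{n≥0} R_n(x) y^n − x y ) = 1 + y + x³y³ − x y⁴. -/
open Polynomial

/-- The rank generating function `R n` of the matchable Lucas cube `Ω_n`:
`R (2m) = A m` and `R (2m+1) = B m`. -/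
noncomputable def R (n : ℕ) : Polynomial ℤ := if n % 2 = 0 then A (n / 2) else B (n / 2)

/-!
Write `p = 1 + x + x²`. Both `A` and `B` satisfy `u (m + 3) = p u (m + 2) - x² u (m + 1)`, so `R`
satisfies the order-four recurrence `R (n + 6) = p R (n + 4) - x² R (n + 2)`. Subtracting `x y`
from `∑ R n yⁿ` only changes the coefficient of `y`, and after that change the recurrence holds
from `n = 5` on. Multiplying a series whose coefficients obey such a recurrence by its
characteristic polynomial `1 - p y² + x² y⁴` leaves only terms of degree at most four, which are
read off from `A 0, A 1, A 2, B 0, B 1, B 2`.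
-/

open PowerSeries in
theorem PowerSeries.mul_mk_eq_of_recurrence {S : Type*} [CommRing S] (a b : S) (s : ℕ → S)
    (h : ∀ n, s (n + 5) = a * s (n + 3) - b * s (n + 1)) :
    (1 - C a * X ^ 2 + C b * X ^ 4) * mk s
      = C (s 0) + C (s 1) * X + C (s 2 - a * s 0) * X ^ 2 + C (s 3 - a * s 1) * X ^ 3
          + C (s 4 - a * s 2 + b * s 0) * X ^ 4 := by
  ext n
  simp only [add_mul, sub_mul, one_mul, mul_assoc, map_add, map_sub, coeff_C_mul, coeff_X_pow_mul',
    coeff_mk, coeff_C, coeff_X]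
  match n with
  | 0 | 1 | 2 | 3 | 4 => simp
  | n + 5 => simp [h]

theorem PowerSeries.mk_sub_C_mul_X {S : Type*} [Ring S] (s : ℕ → S) (c : S) :
    mk s - C c * X = mk fun n ↦ s n - if n = 1 then c else 0 := by
  ext n
  simp only [map_sub, coeff_mk, coeff_C_mul, coeff_X]
  split_ifs <;> simp

theorem R_two_mul (m : ℕ) : R (2 * m) = A m := by
  simp [R]

theorem R_two_mul_add_one (m : ℕ) : R (2 * m + 1) = B m := by
  simp [R, Nat.add_div]

theorem R_add_six (n : ℕ) : R (n + 6) = (1 + X + X ^ 2) * R (n + 4) - X ^ 2 * R (n + 2) := by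
  obtain ⟨m, rfl | rfl⟩ := Nat.even_or_odd' n
  · rw [show 2 * m + 6 = 2 * (m + 3) by ring, show 2 * m + 4 = 2 * (m + 2) by ring,
      show 2 * m + 2 = 2 * (m + 1) by ring, R_two_mul, R_two_mul, R_two_mul, A]
  · rw [show 2 * m + 1 + 6 = 2 * (m + 3) + 1 by ring, show 2 * m + 1 + 4 = 2 * (m + 2) + 1 by ring,
      show 2 * m + 1 + 2 = 2 * (m + 1) + 1 by ring, R_two_mul_add_one, R_two_mul_add_one,
      R_two_mul_add_one, B]

theorem generating_function_of_R :
    (1 - PowerSeries.C (R := Polynomial ℤ) (1 + X + X ^ 2) * PowerSeries.X ^ 2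
        + PowerSeries.C (R := Polynomial ℤ) (X ^ 2) * PowerSeries.X ^ 4)
        * (PowerSeries.mk R - PowerSeries.C (R := Polynomial ℤ) X * PowerSeries.X)
      = 1 + PowerSeries.X + PowerSeries.C (R := Polynomial ℤ) (X ^ 3) * PowerSeries.X ^ 3
          - PowerSeries.C (R := Polynomial ℤ) X * PowerSeries.X ^ 4 := by
  rw [PowerSeries.mk_sub_C_mul_X, PowerSeries.mul_mk_eq_of_recurrence]
  · simp [R, A, B, map_ofNat]
    ring
  · rintro (_ | n)
    · simp [R, B]
      ring
    · simpa using R_add_six n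
end

section
/- For every n ≥ 2 and every real number t with 5 + 4t ≥ 0, the evaluation of Q_n at t equals ((1 + √(5+4t))/2)^n + ((1 − √(5+4t))/2)^n. -/
open Polynomial

/-- The cube polynomials `Q n` of the matchable Lucas cubes. -/
noncomputable def Q : ℕ → Polynomial ℤ
  | 0 => 1
  | 1 => 2 + X
  | 2 => 3 + 2 * X
  | 3 => 4 + 3 * X
  | (n + 4) => Q (n + 3) + (1 + X) * Q (n + 2)

/-- `q n k` : the number of `k`-dimensional induced hypercubes of `Ω_n`,
i.e. the coefficient of `x^k` in `Q n`. -/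
noncomputable def q (n k : ℕ) : ℤ := (Q n).coeff k

/-! The numbers `(1 ± √(5 + 4t)) / 2` are the roots of `y ^ 2 = y + (1 + t)`, so by Newton's
identity their power sums satisfy the recurrence `u (n + 2) = u (n + 1) + (1 + t) u n` that
defines `Q`; both sequences agree at `n = 2, 3` (but not at `n = 0, 1`, where `Q` is irregular). -/

theorem Q_add_four (n : ℕ) : Q (n + 4) = Q (n + 3) + (1 + X) * Q (n + 2) := by
  rw [Q]

theorem pow_add_pow_add_two {R : Type*} [CommRing R] (a b : R) (n : ℕ) :
    a ^ (n + 2) + b ^ (n + 2) = (a + b) * (a ^ (n + 1) + b ^ (n + 1)) - a * b * (a ^ n + b ^ n) := by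
  ring

theorem aeval_Q_add_two_eq_pow_add_pow {R : Type*} [CommRing R] {x a b : R}
    (hsum : a + b = 1) (hprod : a * b = -(1 + x)) (n : ℕ) :
    aeval x (Q (n + 2)) = a ^ (n + 2) + b ^ (n + 2) := by
  induction n using Nat.twoStepInduction with
  | zero =>
    change aeval x (3 + 2 * X) = _
    simp only [map_add, map_mul, map_ofNat, aeval_X]
    linear_combination (-(a + b) - 1) * hsum + 2 * hprod
  | one =>
    change aeval x (4 + 3 * X) = _
    simp only [map_add, map_mul, map_ofNat, aeval_X]
    linear_combination (-(a + b) ^ 2 - (a + b) - 1 + 3 * a * b) * hsum + 3 * hprod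
  | more n ih₀ ih₁ =>
    rw [Q_add_four, map_add, map_mul, ih₀, ih₁, pow_add_pow_add_two a b (n + 2), hsum, hprod]
    simp only [map_add, map_one, aeval_X]
    ring

theorem eval_Q_real (n : ℕ) (hn : 2 ≤ n) (t : ℝ) (ht : 0 ≤ 5 + 4 * t) :
    Polynomial.aeval t (Q n)
      = ((1 + Real.sqrt (5 + 4 * t)) / 2) ^ n + ((1 - Real.sqrt (5 + 4 * t)) / 2) ^ n := by
  obtain ⟨m, rfl⟩ := Nat.exists_eq_add_of_le' hn
  have hsq : Real.sqrt (5 + 4 * t) ^ 2 = 5 + 4 * t := Real.sq_sqrt ht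
  exact aeval_Q_add_two_eq_pow_add_pow (by ring) (by linear_combination -hsq / 4) m
end

section
/- For every n ≥ 2 and every integer k with 1 ≤ k ≤ ⌊n/2⌋, the real number −(5 + tan²((2k−1)π/(2n)))/4 is a root of Q_n, i.e. the evaluation of Q_n at −(5 + tan²((2k−1)π/(2n)))/4 equals 0. -/
open Polynomial

/-!
If `(1 + x) u² = -1`, the sequence `Qₙ(x) uⁿ` satisfies `aₙ₊₂ = u aₙ₊₁ - aₙ` and agrees with the
Vieta–Lucas polynomials `Cₙ(u)` at `n = 2, 3`, so `Qₙ(x) uⁿ = Cₙ(u)` for `n ≥ 2`. With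
`u = 2 cos θ` this is `2 cos (nθ)`, and `x = -(5 + tan² θ)/4` is exactly the choice making
`(1 + x) u² = -1`. For `θ = (2k - 1)π/(2n)` the cosine `cos (nθ)` vanishes while `u ≠ 0`.
-/

theorem aeval_Q_add_two_mul_pow {R : Type*} [CommRing R] {x u : R}
    (h : (1 + x) * u ^ 2 = -1) : ∀ n : ℕ,
    aeval x (Q (n + 2)) * u ^ (n + 2) = (Chebyshev.C R (n + 2 : ℕ)).eval u
  | 0 => by
    simp only [Q, zero_add, Nat.cast_ofNat, Chebyshev.C_two, map_add, map_mul, map_ofNat, aeval_X,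
      eval_sub, eval_pow, eval_X, eval_ofNat]
    linear_combination 2 * h
  | 1 => by
    have hC3 : Chebyshev.C R 3 = X * (X ^ 2 - 2) - X := by
      simpa [Chebyshev.C_two] using Chebyshev.C_add_two R 1
    simp only [Q, Nat.reduceAdd, Nat.cast_ofNat, hC3, map_add, map_mul, map_ofNat, aeval_X,
      eval_sub, eval_mul, eval_pow, eval_X, eval_ofNat]
    linear_combination 3 * u * h
  | n + 2 => by
    have ih₁ := aeval_Q_add_two_mul_pow h (n + 1)
    have ih₀ := aeval_Q_add_two_mul_pow h n
    have hC : Chebyshev.C R ((n + 4 : ℕ) : ℤ)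
        = X * Chebyshev.C R ((n + 3 : ℕ) : ℤ) - Chebyshev.C R ((n + 2 : ℕ) : ℤ) := by
      push_cast
      exact Chebyshev.C_add_two R (n + 2)
    rw [show n + 2 + 2 = n + 4 by rfl, Q, hC]
    simp only [map_add, map_mul, map_one, aeval_X, eval_sub, eval_mul, eval_X]
    rw [← ih₁, ← ih₀]
    linear_combination aeval x (Q (n + 2)) * u ^ (n + 2) * h

theorem aeval_Q_mul_two_mul_cos_pow {x θ : ℝ} (h : (1 + x) * (2 * Real.cos θ) ^ 2 = -1)
    {n : ℕ} (hn : 2 ≤ n) : aeval x (Q n) * (2 * Real.cos θ) ^ n = 2 * Real.cos (n * θ) := by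
  obtain ⟨m, rfl⟩ := Nat.exists_eq_add_of_le' hn
  rw [aeval_Q_add_two_mul_pow h m]
  exact_mod_cast Chebyshev.C_two_mul_real_cos θ (m + 2 : ℕ)

theorem one_add_neg_five_add_tan_sq_div_four_mul_sq {θ : ℝ} (hθ : Real.cos θ ≠ 0) :
    (1 + -(5 + Real.tan θ ^ 2) / 4) * (2 * Real.cos θ) ^ 2 = -1 := by
  linear_combination -Real.one_add_tan_sq_mul_cos_sq_eq_one hθ

theorem cos_mul_odd_mul_pi_div_two_mul {n k : ℕ} (hn : n ≠ 0) :
    Real.cos (n * ((2 * (k : ℝ) - 1) * Real.pi / (2 * n))) = 0 := by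
  rw [Real.cos_eq_zero_iff]
  refine ⟨k - 1, ?_⟩
  field_simp
  push_cast
  ring

theorem odd_mul_pi_div_two_mul_mem_Ioo {n k : ℕ} (hk : 1 ≤ k) (hkn : k * 2 ≤ n) :
    (2 * (k : ℝ) - 1) * Real.pi / (2 * n) ∈ Set.Ioo 0 (Real.pi / 2) := by
  have hk' : (1 : ℝ) ≤ k := by exact_mod_cast hk
  have hkn' : (k * 2 : ℝ) ≤ n := by exact_mod_cast hkn
  constructor
  · apply div_pos <;> nlinarith [Real.pi_pos]
  · rw [div_lt_div_iff₀ (by linarith) two_pos]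
    nlinarith [Real.pi_pos]

theorem roots_of_Q (n : ℕ) (hn : 2 ≤ n) (k : ℕ) (hk1 : 1 ≤ k) (hk2 : k ≤ n / 2) :
    Polynomial.aeval
        (-(5 + Real.tan ((2 * (k : ℝ) - 1) * Real.pi / (2 * n)) ^ 2) / 4) (Q n) = 0 := by
  have hθ := odd_mul_pi_div_two_mul_mem_Ioo hk1 ((Nat.le_div_iff_mul_le two_pos).mp hk2)
  have hcos := (Real.cos_pos_of_mem_Ioo ⟨by linarith [hθ.1, Real.pi_pos], hθ.2⟩).ne'
  have hQ := aeval_Q_mul_two_mul_cos_pow (one_add_neg_five_add_tan_sq_div_four_mul_sq hcos) hn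
  rw [cos_mul_odd_mul_pi_div_two_mul (by omega), mul_zero] at hQ
  exact (mul_eq_zero.mp hQ).resolve_right (pow_ne_zero _ (mul_ne_zero two_ne_zero hcos))
end

section
/- For every n ≥ 2, the evaluation of Q_n at 0 equals the Lucas number L_n, and the evaluation of Q_n at 1 equals the Jacobsthal–Lucas number J_n. -/
/-! At `x = 0` and `x = 1` the recurrence of `Q` becomes the Lucas and the Jacobsthal–Lucas
recurrence, and `Q 2`, `Q 3` take the values `L 2 = 3`, `L 3 = 4` and `J 2 = 5`, `J 3 = 7`.
The sequences are compared from index 2 on, since `Q 1` matches neither `L 1` nor `J 1`. -/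

open Polynomial

/-- The Lucas numbers. -/
def L : ℕ → ℤ
  | 0 => 2
  | 1 => 1
  | (n + 2) => L (n + 1) + L n

/-- The Jacobsthal–Lucas numbers. -/
def J : ℕ → ℤ
  | 0 => 2
  | 1 => 1
  | (n + 2) => J (n + 1) + 2 * J n

theorem eq_of_two_step_recurrence {α : Type*} {u v : ℕ → α} (f : α → α → α)
    (hu : ∀ n, u (n + 2) = f (u (n + 1)) (u n)) (hv : ∀ n, v (n + 2) = f (v (n + 1)) (v n))
    (h0 : u 0 = v 0) (h1 : u 1 = v 1) (n : ℕ) : u n = v n := by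
  have both : ∀ n, u n = v n ∧ u (n + 1) = v (n + 1) := by
    intro n
    induction n with
    | zero => exact ⟨h0, h1⟩
    | succ k ih => exact ⟨ih.2, by rw [hu, hv, ih.1, ih.2]⟩
  exact (both n).1

theorem eval_Q_add_four (x : ℤ) (n : ℕ) :
    (Q (n + 4)).eval x = (Q (n + 3)).eval x + (1 + x) * (Q (n + 2)).eval x := by
  simp [Q]

theorem eval_Q_zero_one (n : ℕ) (hn : 2 ≤ n) :
    (Q n).eval 0 = L n ∧ (Q n).eval 1 = J n := by
  obtain ⟨m, rfl⟩ := Nat.exists_eq_add_of_le' hn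
  constructor
  · refine eq_of_two_step_recurrence (u := fun m ↦ (Q (m + 2)).eval 0) (v := fun m ↦ L (m + 2))
      (fun a b ↦ a + b) (fun k ↦ ?_) (fun k ↦ rfl) (by simp [Q, L]) (by simp [Q, L]) m
    simpa using eval_Q_add_four 0 k
  · refine eq_of_two_step_recurrence (u := fun m ↦ (Q (m + 2)).eval 1) (v := fun m ↦ J (m + 2))
      (fun a b ↦ a + 2 * b) (fun k ↦ ?_) (fun k ↦ rfl) (by simp [Q, J]) (by simp [Q, J]) m
    simpa [one_add_one_eq_two] using eval_Q_add_four 1 k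
end

section
/- In the ring of formal power series in y with coefficients in ℤ[x]: (1 − y − (x+1)y²) · ( ∑_{n≥0} Q_n(x) y^n − (1+x)y + 1 ) = 2 − y. -/
open Polynomial

/-!
Subtracting `(1+x)y - 1` from `∑ Q_n y^n` replaces the first two coefficients by `2` and `1`,
the initial values of the Lucas numbers (the new sequence `lucasQ` specialises to them at
`x = 0`). With these the recurrence `b_{n+2} = b_{n+1} + (1+x) b_n` holds from `n = 0` on, so
multiplying by the characteristic polynomial `1 - y - (1+x)y²` leaves only
`b_0 + (b_1 - b_0) y = 2 - y`.
-/

namespace PowerSeries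

theorem one_sub_X_sub_C_mul_X_sq_mul_mk {R : Type*} [CommRing R] {c : R} {b : ℕ → R}
    (hb : ∀ n, b (n + 2) = b (n + 1) + c * b n) :
    (1 - X - C c * X ^ 2) * mk b = C (b 0) + C (b 1 - b 0) * X := by
  ext (_ | _ | n) <;> simp [sub_mul, mul_assoc, coeff_X_pow_mul', hb]

end PowerSeries

noncomputable def lucasQ : ℕ → ℤ[X]
  | 0 => 2
  | 1 => 1
  | n + 2 => lucasQ (n + 1) + (1 + X) * lucasQ n

theorem lucasQ_add_two (n : ℕ) : lucasQ (n + 2) = Q (n + 2) := by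
  induction n using Nat.twoStepInduction with
  | zero => simp only [lucasQ, Q]; ring
  | one => simp only [lucasQ, Q]; ring
  | more n ih₀ ih₁ => rw [lucasQ, ih₀, ih₁, Q]

theorem mk_lucasQ :
    PowerSeries.mk lucasQ = PowerSeries.mk Q - PowerSeries.C (1 + X) * PowerSeries.X + 1 := by
  refine PowerSeries.ext fun n => ?_
  rcases n with _ | _ | n
  · norm_num [lucasQ, Q]
  · norm_num [lucasQ, Q]
  · simp [lucasQ_add_two]

theorem generating_function_of_Q :
    (1 - PowerSeries.X - PowerSeries.C (X + 1 : Polynomial ℤ) * PowerSeries.X ^ 2)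
        * (PowerSeries.mk Q - PowerSeries.C (1 + X : Polynomial ℤ) * PowerSeries.X + 1)
      = 2 - PowerSeries.X := by
  have hrec (n : ℕ) : lucasQ (n + 2) = lucasQ (n + 1) + (X + 1) * lucasQ n := by
    rw [lucasQ, add_comm X]
  rw [← mk_lucasQ, PowerSeries.one_sub_X_sub_C_mul_X_sq_mul_mk hrec]
  simp only [lucasQ, map_sub, map_one, map_ofNat]
  ring
end

section
/- For every n ≥ 2, Q_n(x) = ∑_{j=0}^{⌊n/2⌋} ( C(n−j, j) + C(n−j−1, j−1) ) · (1+x)^j as polynomials in ℤ[x], where C(a,b) is the binomial coefficient with the convention that C(a,b) = 0 when b < 0. -/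
/-! With `y = 1 + X`, both sides satisfy `u (n + 2) = u (n + 1) + y * u n` for `n ≥ 2` and agree at
`n = 2, 3`. To see the recurrence for the right-hand side, split the Lucas triangle entry
`Y (n - j) j` into its two binomial coefficients: this writes the sum as `F n + y * F (n - 2)`,
where `F n = ∑_{a + b = n} C(a, b) y^b` is the Fibonacci polynomial, and `F` satisfies the
recurrence by Pascal's rule. -/

open Polynomial

/-- The entry `Y a b = C(a,b) + C(a-1,b-1)` of the Lucas triangle, where the second
binomial coefficient is `0` when `b - 1 < 0`, i.e. when `b = 0`. -/
def Y (a b : ℕ) : ℤ :=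
  (a.choose b : ℤ) + (if b = 0 then 0 else ((a - 1).choose (b - 1) : ℤ))

open Finset

section FibSum

variable {R : Type*} [CommRing R] (y : R)

/-- The Fibonacci polynomials, shifted so that `fibSum 1 n = Nat.fib (n + 1)`. -/
noncomputable def fibSum (n : ℕ) : R :=
  ∑ p ∈ antidiagonal n, (p.1.choose p.2 : R) * y ^ p.2

@[simp] lemma fibSum_zero : fibSum y 0 = 1 := by simp [fibSum]

@[simp] lemma fibSum_one : fibSum y 1 = 1 := by simp [fibSum, Nat.antidiagonal_succ]

lemma fibSum_add_two (n : ℕ) : fibSum y (n + 2) = fibSum y (n + 1) + y * fibSum y n := by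
  have pascal : ∀ p ∈ antidiagonal n, ((p.1 + 1).choose (p.2 + 1) : R) * y ^ (p.2 + 1)
      = (p.1.choose (p.2 + 1) : R) * y ^ (p.2 + 1) + y * ((p.1.choose p.2 : R) * y ^ p.2) := by
    intro p _
    rw [Nat.choose_succ_succ', Nat.cast_add]
    ring
  rw [fibSum, Nat.sum_antidiagonal_succ', Nat.sum_antidiagonal_succ, sum_congr rfl pascal,
    sum_add_distrib, fibSum, Nat.sum_antidiagonal_succ', fibSum, mul_sum]
  simp [add_assoc]

lemma sum_range_choose_mul_pow (n : ℕ) :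
    ∑ j ∈ range (n / 2 + 1), ((n - j).choose j : R) * y ^ j = fibSum y n := by
  rw [fibSum, ← Nat.sum_antidiagonal_swap, Nat.sum_antidiagonal_eq_sum_range_succ_mk]
  refine sum_subset (fun j hj ↦ ?_) (fun j _ hj ↦ ?_)
  · simp only [mem_range] at hj ⊢; omega
  · simp only [mem_range] at hj
    simp [Nat.choose_eq_zero_of_lt (by omega : n - j < j)]

lemma sum_range_Y_mul_pow (n : ℕ) :
    ∑ j ∈ range ((n + 2) / 2 + 1), (Y (n + 2 - j) j : R) * y ^ j
      = fibSum y (n + 2) + y * fibSum y n := by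
  simp only [Y, Int.cast_add, Int.cast_natCast, add_mul, sum_add_distrib, sum_range_choose_mul_pow]
  rw [show (n + 2) / 2 = n / 2 + 1 by omega, sum_range_succ', ← sum_range_choose_mul_pow y n,
    mul_sum]
  simp only [Nat.add_one_ne_zero, if_false, if_true, Int.cast_zero, zero_mul, add_zero]
  refine congrArg _ (sum_congr rfl fun j _ ↦ ?_)
  rw [show n + 2 - (j + 1) - 1 = n - j by omega, Nat.add_sub_cancel, pow_succ]
  push_cast
  ring

end FibSum

lemma Q_add_two_eq_fibSum (n : ℕ) :
    Q (n + 2) = fibSum (1 + X) (n + 2) + (1 + X) * fibSum (1 + X) n := by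
  induction n using Nat.twoStepInduction with
  | zero => simp [Q, fibSum_add_two]; ring
  | one => simp [Q, fibSum_add_two]; ring
  | more n ih₀ ih₁ =>
    rw [Q, ih₁, ih₀, fibSum_add_two _ (n + 2), fibSum_add_two _ (n + 1), fibSum_add_two _ n]
    ring

theorem Q_eq_sum_Lucas_triangle (n : ℕ) (hn : 2 ≤ n) :
    Q n = ∑ j ∈ Finset.range (n / 2 + 1), Polynomial.C (Y (n - j) j) * (1 + X) ^ j := by
  obtain ⟨m, rfl⟩ := Nat.exists_eq_add_of_le' hn
  simp only [eq_intCast, sum_range_Y_mul_pow, Q_add_two_eq_fibSum]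
end

section
/- For every n ≥ 2 and every k ≥ 0, q_{n,k} = ∑_{j=k}^{⌊n/2⌋} ( C(n−j, j) + C(n−j−1, j−1) ) · C(j, k), where C(a,b) is the binomial coefficient with the convention that C(a,b) = 0 when b < 0. -/
open Polynomial

noncomputable def S (n : ℕ) : Polynomial ℤ :=
  ∑ j ∈ Finset.range (n + 1), Polynomial.C (Y (n - j) j) * (1 + X) ^ j

lemma pascalY (a b : ℕ) (ha : 1 ≤ a) (hb : 1 ≤ b) (hab : 4 ≤ a + b) :
    Y a b = Y (a - 1) b + Y (a - 1) (b - 1) := by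
  obtain ⟨a', rfl⟩ : ∃ a', a = a' + 1 := ⟨a - 1, by omega⟩
  obtain ⟨b', rfl⟩ : ∃ b', b = b' + 1 := ⟨b - 1, by omega⟩
  simp only [Y, Nat.add_sub_cancel, Nat.succ_ne_zero, if_false]
  rw [Nat.choose_succ_succ a' b']
  rcases Nat.eq_zero_or_pos b' with hb0 | hb0
  · subst hb0; simp; ring
  · obtain ⟨b'', rfl⟩ : ∃ b'', b' = b'' + 1 := ⟨b' - 1, by omega⟩
    simp only [Nat.add_sub_cancel, Nat.succ_ne_zero, if_false]
    rcases Nat.eq_zero_or_pos a' with ha0 | ha0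
    · subst ha0
      have hb2 : 1 ≤ b'' := by omega
      simp [Nat.choose_eq_zero_of_lt (by omega : 0 < b'' + 1),
        Nat.choose_eq_zero_of_lt (by omega : 0 < b''), Nat.zero_sub]
    · obtain ⟨a'', rfl⟩ : ∃ a'', a' = a'' + 1 := ⟨a' - 1, by omega⟩
      simp only [Nat.add_sub_cancel]
      rw [Nat.choose_succ_succ a'' b'']
      push_cast
      ring

lemma S_rec (n : ℕ) : S (n + 4) = S (n + 3) + (1 + X) * S (n + 2) := by
  have hmul : (1 + X) * S (n + 2)
      = ∑ i ∈ Finset.range (n + 3), Polynomial.C (Y (n + 2 - i) i) * (1 + X) ^ (i + 1) := by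
    rw [S, Finset.mul_sum]
    refine Finset.sum_congr rfl fun i _ => by ring
  have hS3 : S (n + 3) = Polynomial.C 1 +
      ∑ i ∈ Finset.range (n + 3), Polynomial.C (Y (n + 2 - i) (i + 1)) * (1 + X) ^ (i + 1) := by
    rw [S, Finset.sum_range_succ']
    simp only [Nat.sub_zero, pow_zero, mul_one]
    rw [add_comm]
    congr 1
    refine Finset.sum_congr rfl fun i hi => ?_
    have h : n + 3 - (i + 1) = n + 2 - i := by omega
    rw [h]
  have hS4 : S (n + 4) = Polynomial.C 1 +
      ∑ i ∈ Finset.range (n + 4), Polynomial.C (Y (n + 3 - i) (i + 1)) * (1 + X) ^ (i + 1) := by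
    rw [S, Finset.sum_range_succ']
    simp only [Nat.sub_zero, pow_zero, mul_one]
    rw [add_comm]
    congr 1
    refine Finset.sum_congr rfl fun i hi => ?_
    have h : n + 4 - (i + 1) = n + 3 - i := by omega
    rw [h]
  rw [hS4, hS3, hmul, Finset.sum_range_succ]
  have htop : Y (n + 3 - (n + 3)) (n + 3 + 1) = 0 := by
    simp [Y, Nat.choose_eq_zero_of_lt]
  rw [htop]
  simp only [map_zero, zero_mul, add_zero]
  rw [add_assoc, ← Finset.sum_add_distrib]
  congr 1
  refine Finset.sum_congr rfl fun i hi => ?_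
  rw [Finset.mem_range] at hi
  have hp := pascalY (n + 3 - i) (i + 1) (by omega) (by omega) (by omega)
  have h1 : n + 3 - i - 1 = n + 2 - i := by omega
  have h2 : i + 1 - 1 = i := by omega
  rw [h1, h2] at hp
  rw [hp, map_add]
  ring

lemma Q_eq_S (n : ℕ) : Q (n + 2) = S (n + 2) := by
  induction n using Nat.twoStepInduction with
  | zero =>
    show Q 2 = S 2
    simp [Q, S, Finset.sum_range_succ, Y]
    ring
  | one =>
    show Q 3 = S 3
    simp [Q, S, Finset.sum_range_succ, Y]
    ring
  | more m ih1 ih2 =>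
    show Q (m + 4) = S (m + 4)
    rw [show Q (m + 4) = Q (m + 3) + (1 + X) * Q (m + 2) from rfl, ih1, ih2, S_rec]

theorem q_eq_sum_Lucas_triangle (n : ℕ) (hn : 2 ≤ n) (k : ℕ) :
    q n k = ∑ j ∈ Finset.Icc k (n / 2), Y (n - j) j * (j.choose k : ℤ) := by
  obtain ⟨m, rfl⟩ : ∃ m, n = m + 2 := ⟨n - 2, by omega⟩
  have hq : q (m + 2) k
      = ∑ j ∈ Finset.range (m + 3), Y (m + 2 - j) j * (j.choose k : ℤ) := by
    rw [q, Q_eq_S, S, Polynomial.finset_sum_coeff]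
    refine Finset.sum_congr rfl fun j _ => ?_
    rw [Polynomial.coeff_C_mul, add_comm (1 : Polynomial ℤ) X,
      Polynomial.coeff_X_add_one_pow]
  rw [hq]
  symm
  apply Finset.sum_subset
  · intro x hx
    rw [Finset.mem_Icc] at hx
    rw [Finset.mem_range]
    omega
  · intro x hx hnx
    rw [Finset.mem_range] at hx
    rw [Finset.mem_Icc] at hnx
    push_neg at hnx
    by_cases hk : x < k
    · rw [Nat.choose_eq_zero_of_lt hk]
      simp
    · have hx2 : (m + 2) / 2 < x := hnx (by omega)
      have hY : Y (m + 2 - x) x = 0 := by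
        have h1 : m + 2 - x < x := by omega
        have h2 : x ≠ 0 := by omega
        have h3 : m + 2 - x - 1 < x - 1 := by omega
        simp [Y, h2, Nat.choose_eq_zero_of_lt h1, Nat.choose_eq_zero_of_lt h3]
      rw [hY, zero_mul]
end

section
/- For every n ≥ 2, q_{n,0} = L_n and q_{n,1} = n·F_{n−1}; moreover, for every n ≥ 4, 10·q_{n,2} = 2n·F_{n−3} + n(n−3)·L_{n−2}. -/
open Polynomial

/-- The Fibonacci numbers. -/
def F : ℕ → ℤ
  | 0 => 0
  | 1 => 1
  | (n + 2) => F (n + 1) + F n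

lemma qr0 (n : ℕ) : q (n+4) 0 = q (n+3) 0 + q (n+2) 0 := by
  simp [q, Q, add_mul, coeff_X_mul]

lemma qr (n k : ℕ) : q (n+4) (k+1) = q (n+3) (k+1) + q (n+2) (k+1) + q (n+2) k := by
  simp [q, Q, add_mul, coeff_X_mul]; ring

lemma q20 : q 2 0 = 3 := by simp [q, Q]
lemma q21 : q 2 1 = 2 := by simp [q, Q]
lemma q22 : q 2 2 = 0 := by simp [q, Q, coeff_X]
lemma q30 : q 3 0 = 4 := by simp [q, Q]
lemma q31 : q 3 1 = 3 := by simp [q, Q]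
lemma q32 : q 3 2 = 0 := by simp [q, Q, coeff_X]

lemma q42 : q 4 2 = 2 := by
  have := qr 0 1
  norm_num at this
  rw [this, q32, q22, q21]; ring

lemma q52 : q 5 2 = 5 := by
  have := qr 1 1
  norm_num at this
  rw [this, q42, q32, q31]; ring

lemma LF : ∀ m, L (m+2) = F (m+1) + F (m+3)
  | 0 => by decide
  | 1 => by decide
  | (m+2) => by
    have h1 := LF m
    have h2 : L (m+3) = F (m+2) + F (m+4) := LF (m+1)
    show L (m+4) = F (m+3) + F (m+5)
    rw [show L (m+4) = L (m+3) + L (m+2) from rfl, h1, h2,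
      show F (m+5) = F (m+4) + F (m+3) from rfl,
      show F (m+3) = F (m+2) + F (m+1) from rfl]
    ring

lemma A' : ∀ m, q (m+2) 0 = L (m+2)
  | 0 => by rw [q20]; decide
  | 1 => by rw [q30]; decide
  | (m+2) => by
    rw [show m+2+2 = m+4 from rfl, qr0, A' m, A' (m+1)]; rfl

lemma B' : ∀ m, q (m+2) 1 = ((m:ℤ)+2) * F (m+1)
  | 0 => by rw [q21]; norm_num [F]
  | 1 => by rw [q31]; norm_num; decide
  | (m+2) => by
    have b1 := B' m
    have b2 := B' (m+1)
    push_cast at b2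
    simp only [show m+1+2 = m+3 from rfl, show m+1+1 = m+2 from rfl] at b2
    rw [show m+2+2 = m+4 from rfl, show m+2+1 = m+3 from rfl, qr, b1, b2, A' m, LF m]
    push_cast
    rw [show F (m+3) = F (m+2) + F (m+1) from rfl]
    ring

lemma C' : ∀ m, 10 * q (m+4) 2 = 2*((m:ℤ)+4)*F (m+1) + ((m:ℤ)+4)*((m:ℤ)+1)*L (m+2)
  | 0 => by norm_num [q42]; decide
  | 1 => by norm_num [q52]; decide
  | (m+2) => by
    have h1 := C' m
    have h2 := C' (m+1)
    have h3 := B' (m+2)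
    push_cast at h2 h3
    simp only [show m+1+4 = m+5 from rfl, show m+1+1 = m+2 from rfl,
      show m+1+2 = m+3 from rfl, show m+2+2 = m+4 from rfl,
      show m+2+1 = m+3 from rfl] at h2 h3
    rw [qr]
    simp only [show m+2+3 = m+5 from rfl, show m+2+2 = m+4 from rfl,
      show (1:ℕ)+1 = 2 from rfl, show m+2+1 = m+3 from rfl]
    rw [mul_add, mul_add, h1, h2, h3, LF m, LF (m+1), LF (m+2)]
    simp only [show m+1+1 = m+2 from rfl, show m+1+3 = m+4 from rfl,
      show m+2+1 = m+3 from rfl, show m+2+3 = m+5 from rfl]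
    push_cast
    rw [show F (m+5) = F (m+4) + F (m+3) from rfl,
      show F (m+4) = F (m+3) + F (m+2) from rfl,
      show F (m+3) = F (m+2) + F (m+1) from rfl]
    ring

theorem q_zero_one_two (n : ℕ) (hn : 2 ≤ n) :
    q n 0 = L n ∧ q n 1 = (n : ℤ) * F (n - 1) ∧
    (4 ≤ n → 10 * q n 2 = 2 * (n : ℤ) * F (n - 3) + (n : ℤ) * ((n : ℤ) - 3) * L (n - 2)) := by
  obtain ⟨m, rfl⟩ : ∃ m, n = m + 2 := ⟨n - 2, by omega⟩
  refine ⟨A' m, ?_, ?_⟩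
  · have := B' m
    rw [show m + 2 - 1 = m + 1 from by omega, this]
    push_cast; ring
  · intro h4
    obtain ⟨k, rfl⟩ : ∃ k, m = k + 2 := ⟨m - 2, by omega⟩
    have := C' k
    rw [show k+2+2 = k+4 from rfl, show k+4-3 = k+1 from by omega,
      show k+4-2 = k+2 from by omega, this]
    push_cast
    ring
end

section
/- For every n ≥ 6, 150·q_{n,3} = 12n·F_{n−5} + 6n(n−5)·L_{n−4} + 5n(n²−9n+20)·F_{n−3}. -/
open Polynomial

/-! Comparing coefficients in the recurrence for `Q` gives
`q (n+4) (k+1) = q (n+3) (k+1) + q (n+2) (k+1) + q (n+2) k`, so each coefficient sequence satisfies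
the Fibonacci recurrence forced by the previous one. The closed forms for `k = 0, 1, 2, 3` are then
proved in turn by two-step induction: once every Fibonacci and Lucas number is expanded into two
consecutive Fibonacci numbers, the inductive step is a polynomial identity. -/

theorem F_add_two (n : ℕ) : F (n + 2) = F (n + 1) + F n := rfl

theorem L_succ_eq_F_add_F (n : ℕ) : L (n + 1) = F n + F (n + 2) := by
  induction n using Nat.twoStepInduction with
  | zero => rfl
  | one => rfl
  | more n ih₀ ih₁ =>
    rw [show L (n + 3) = L (n + 2) + L (n + 1) from rfl, ih₀, ih₁]
    simp only [F_add_two]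
    ring

theorem q_add_four_zero (n : ℕ) : q (n + 4) 0 = q (n + 3) 0 + q (n + 2) 0 := by
  simp [q, Q]

theorem q_add_four_succ (n k : ℕ) :
    q (n + 4) (k + 1) = q (n + 3) (k + 1) + q (n + 2) (k + 1) + q (n + 2) k := by
  simp [q, Q, add_mul, coeff_X_mul]
  ring

theorem q_add_two_zero (m : ℕ) : q (m + 2) 0 = L (m + 2) := by
  induction m using Nat.twoStepInduction with
  | zero => simp [q, Q, L]
  | one => simp [q, Q, L]
  | more m ih₀ ih₁ =>
    rw [q_add_four_zero, ih₀, ih₁]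
    rfl

theorem q_add_two_one (m : ℕ) : q (m + 2) 1 = ((m : ℤ) + 2) * F (m + 1) := by
  induction m using Nat.twoStepInduction with
  | zero => simp [q, Q, coeff_X, F]
  | one => simp [q, Q, coeff_X, F]
  | more m ih₀ ih₁ =>
    rw [q_add_four_succ, ih₀, ih₁, q_add_two_zero, L_succ_eq_F_add_F]
    simp only [F_add_two]
    push_cast
    ring

theorem ten_mul_q_add_four_two (m : ℕ) :
    10 * q (m + 4) 2
      = ((m : ℤ) + 4) * (3 * m + 5) * F (m + 2) - 2 * ((m : ℤ) + 4) * (m + 2) * F m := by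
  induction m using Nat.twoStepInduction with
  | zero => simp [q, Q, add_mul, mul_add, coeff_X_mul, coeff_X, F]
  | one => simp [q, Q, add_mul, mul_add, coeff_X_mul, coeff_X, F]
  | more m ih₀ ih₁ =>
    rw [q_add_four_succ (m + 2), q_add_two_one (m + 2)]
    simp only [F_add_two] at ih₀ ih₁ ⊢
    push_cast at ih₀ ih₁ ⊢
    linear_combination ih₀ + ih₁

theorem hundred_fifty_mul_q_add_six_three (m : ℕ) :
    150 * q (m + 6) 3
      = 12 * ((m : ℤ) + 6) * F (m + 1) + 6 * ((m : ℤ) + 6) * ((m : ℤ) + 1) * L (m + 2)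
        + 5 * ((m : ℤ) + 6) * ((m : ℤ) + 1) * ((m : ℤ) + 2) * F (m + 3) := by
  induction m using Nat.twoStepInduction with
  | zero => simp [q, Q, add_mul, mul_add, coeff_X_mul, coeff_X, F, L]
  | one => simp [q, Q, add_mul, mul_add, coeff_X_mul, coeff_X, F, L]
  | more m ih₀ ih₁ =>
    have h := ten_mul_q_add_four_two (m + 2)
    rw [q_add_four_succ (m + 4)]
    simp only [L_succ_eq_F_add_F, F_add_two] at h ih₀ ih₁ ⊢
    push_cast at h ih₀ ih₁ ⊢
    linear_combination ih₀ + ih₁ + 15 * h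

theorem q_three (n : ℕ) (hn : 6 ≤ n) :
    150 * q n 3
      = 12 * (n : ℤ) * F (n - 5) + 6 * (n : ℤ) * ((n : ℤ) - 5) * L (n - 4)
        + 5 * (n : ℤ) * ((n : ℤ) ^ 2 - 9 * (n : ℤ) + 20) * F (n - 3) := by
  obtain ⟨m, rfl⟩ := Nat.exists_eq_add_of_le' hn
  rw [hundred_fifty_mul_q_add_six_three, show m + 6 - 5 = m + 1 by omega,
    show m + 6 - 4 = m + 2 by omega, show m + 6 - 3 = m + 3 by omega]
  push_cast
  ring
end

section
/- For every fixed k ≥ 2, in the ring of formal power series in y over ℤ: (1−y−y²)^{k+1} · ∑_{n≥0} q_{n,k} y^n = (2−y)·y^{2k}; and for k = 1: (1−y−y²)² · ( ∑_{n≥0} q_{n,1} y^n − y ) = (2−y)·y². -/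
open Polynomial

/-!
The recurrence of `Q` extends to all `n ≥ 2` up to a correction `-(1 + x)²` at `n = 3`, so with
`F_k = ∑ₙ q n k yⁿ` the `x^k`-coefficient of the recurrence reads
`(1 - y - y²) F_k = y² F_{k-1} + (terms of degree ≤ 3 that vanish for k ≥ 3)`.
Hence `(1 - y - y²) F_{k+1} = y² F_k` for `k ≥ 2`, and the claims follow by induction on `k`
from the explicit forms of `F_0`, `F_1`, `F_2`.
-/

theorem PowerSeries.one_sub_X_sub_X_sq_mul_mk_of_add_two {R : Type*} [CommRing R]
    {f : ℕ → R} {ψ : PowerSeries R} (h : ∀ n, f (n + 2) = f (n + 1) + f n + coeff n ψ) :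
    (1 - X - X ^ 2) * mk f = C (f 0) + C (f 1 - f 0) * X + X ^ 2 * ψ := by
  ext (_ | _ | n)
  · simp
  · simp [sub_mul, coeff_X_pow_mul']
  · simp [sub_mul, coeff_X_pow_mul', coeff_succ_X_mul, h]
    ring

theorem Q_add_two (n : ℕ) :
    Q (n + 2) = Q (n + 1) + (1 + X) * Q n - if n = 1 then (1 + X) ^ 2 else 0 := by
  match n with
  | 0 => simp [Q]; ring
  | 1 => simp [Q]; ring
  | n + 2 => simp [Q]

theorem q_add_two_zero_s14 (n : ℕ) :
    q (n + 2) 0 = q (n + 1) 0 + q n 0 - if n = 1 then 1 else 0 := by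
  rw [q, Q_add_two n]
  split_ifs <;> simp [q, add_mul, coeff_one_add_X_pow]

theorem q_add_two_succ (n k : ℕ) :
    q (n + 2) (k + 1) = q (n + 1) (k + 1) + q n (k + 1) + q n k
      - if n = 1 then ((2 : ℕ).choose (k + 1) : ℤ) else 0 := by
  rw [q, Q_add_two n]
  split_ifs <;> simp [q, add_mul, coeff_X_mul, coeff_one_add_X_pow] <;> ring

local notation "Y" => (PowerSeries.X : PowerSeries ℤ)

theorem one_sub_X_sub_X_sq_mul_mk_q_zero :
    (1 - Y - Y ^ 2) * PowerSeries.mk (q · 0) = 1 + Y - Y ^ 3 := by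
  rw [PowerSeries.one_sub_X_sub_X_sq_mul_mk_of_add_two (ψ := -Y) fun n => by
    rw [q_add_two_zero_s14, map_neg, PowerSeries.coeff_X, sub_eq_add_neg]]
  simp [q, Q]
  ring

theorem one_sub_X_sub_X_sq_mul_mk_q_succ (k : ℕ) :
    (1 - Y - Y ^ 2) * PowerSeries.mk (q · (k + 1)) =
      PowerSeries.C (q 1 (k + 1)) * Y
        + Y ^ 2 * (PowerSeries.mk (q · k) - PowerSeries.C ((2 : ℕ).choose (k + 1) : ℤ) * Y) := by
  rw [PowerSeries.one_sub_X_sub_X_sq_mul_mk_of_add_two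
    (ψ := PowerSeries.mk (q · k) - PowerSeries.C ((2 : ℕ).choose (k + 1) : ℤ) * Y) fun n => by
      rw [q_add_two_succ, map_sub, PowerSeries.coeff_mk, PowerSeries.coeff_C_mul,
        PowerSeries.coeff_X, mul_ite, mul_one, mul_zero, add_sub_assoc]]
  simp [q, Q, Polynomial.coeff_one]

theorem one_sub_X_sub_X_sq_mul_mk_q_succ_of_two_le {k : ℕ} (hk : 2 ≤ k) :
    (1 - Y - Y ^ 2) * PowerSeries.mk (q · (k + 1)) = Y ^ 2 * PowerSeries.mk (q · k) := by
  obtain ⟨k, rfl⟩ := Nat.exists_eq_add_of_le' hk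
  simpa [q, Q, Polynomial.coeff_X, Nat.choose_eq_zero_of_lt]
    using one_sub_X_sub_X_sq_mul_mk_q_succ (k + 2)

theorem generating_function_of_q_fixed_k :
    (∀ k : ℕ, 2 ≤ k →
        (1 - PowerSeries.X - PowerSeries.X ^ 2) ^ (k + 1)
            * PowerSeries.mk (fun n => q n k)
          = (2 - PowerSeries.X) * PowerSeries.X ^ (2 * k)) ∧
    (1 - PowerSeries.X - PowerSeries.X ^ 2) ^ 2
        * (PowerSeries.mk (fun n => q n 1) - PowerSeries.X)
      = ((2 : PowerSeries ℤ) - PowerSeries.X) * PowerSeries.X ^ 2 := by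
  have h0 := one_sub_X_sub_X_sq_mul_mk_q_zero
  have h1 : (1 - Y - Y ^ 2) * PowerSeries.mk (q · 1) =
      Y + Y ^ 2 * (PowerSeries.mk (q · 0) - 2 * Y) := by
    simpa [q, Q] using one_sub_X_sub_X_sq_mul_mk_q_succ 0
  have h2 : (1 - Y - Y ^ 2) * PowerSeries.mk (q · 2) = Y ^ 2 * (PowerSeries.mk (q · 1) - Y) := by
    simpa [q, Q, Polynomial.coeff_X] using one_sub_X_sub_X_sq_mul_mk_q_succ 1
  have hq1 : (1 - Y - Y ^ 2) ^ 2 * (PowerSeries.mk (q · 1) - Y) = (2 - Y) * Y ^ 2 := by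
    linear_combination (1 - Y - Y ^ 2) * h1 + Y ^ 2 * h0
  refine ⟨fun k hk => ?_, hq1⟩
  induction k, hk using Nat.le_induction with
  | base => linear_combination (1 - Y - Y ^ 2) ^ 2 * h2 + Y ^ 2 * hq1
  | succ k hk ih =>
    linear_combination (1 - Y - Y ^ 2) ^ (k + 1) * one_sub_X_sub_X_sq_mul_mk_q_succ_of_two_le hk
      + Y ^ 2 * ih
end

section
/- For every n ≥ 2, the leading-index coefficient q_{n,⌊n/2⌋} (the number of maximum induced hypercubes of the matchable Lucas cube) equals 2 if n is even, and equals n if n is odd. -/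
open Polynomial

/-
Comparing coefficients of `x^(k+1)` in `Q (n+4) = Q (n+3) + (1 + x) Q (n+2)` gives
`q (n+4) (k+1) = q (n+3) (k+1) + q (n+2) (k+1) + q (n+2) k`. Except for `Q 1`, every `Q n` has
degree at most `n / 2`, so for the top coefficient `k + 1 = ⌊(n+4)/2⌋` only the term `q (n+2) k`
survives when `n` is even, while for odd `n` also `q (n+3) (k+1)` survives. Hence the top
coefficient is constantly `2` along even indices, and grows by `2` at each odd step from `q 3 1 = 3`.
-/

theorem coeff_Q_add_four (n k : ℕ) :
    (Q (n + 4)).coeff (k + 1) =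
      (Q (n + 3)).coeff (k + 1) + (Q (n + 2)).coeff (k + 1) + (Q (n + 2)).coeff k := by
  rw [Q, coeff_add, add_mul, one_mul, coeff_add, coeff_X_mul, add_assoc]

theorem coeff_Q_eq_zero_of_lt {n k : ℕ} (hn : n ≠ 1) (hk : n < 2 * k) : (Q n).coeff k = 0 := by
  induction n using Q.induct generalizing k with
  | case1 | case3 | case4 =>
    obtain ⟨j, rfl⟩ := Nat.exists_eq_add_of_le' (show 1 ≤ k by omega)
    simp [Q, coeff_one, coeff_X, coeff_ofNat_succ] <;> omega
  | case2 => exact absurd rfl hn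
  | case5 n ih₃ ih₂ =>
    obtain ⟨j, rfl⟩ := Nat.exists_eq_add_of_le' (show 1 ≤ k by omega)
    rw [coeff_Q_add_four, ih₃ (by omega) (by omega), ih₂ (by omega) (by omega),
      ih₂ (by omega) (by omega), add_zero, add_zero]

theorem coeff_Q_two_mul_add_two (m : ℕ) : (Q (2 * m + 2)).coeff (m + 1) = 2 := by
  induction m with
  | zero => simp [Q, coeff_X]
  | succ m ih =>
    rw [show 2 * (m + 1) + 2 = 2 * m + 4 by ring, coeff_Q_add_four,
      coeff_Q_eq_zero_of_lt (by omega) (by omega), coeff_Q_eq_zero_of_lt (by omega) (by omega), ih,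
      zero_add, zero_add]

theorem coeff_Q_two_mul_add_three (m : ℕ) : (Q (2 * m + 3)).coeff (m + 1) = 2 * m + 3 := by
  induction m with
  | zero => simp [Q, coeff_X]
  | succ m ih =>
    rw [show 2 * (m + 1) + 3 = (2 * m + 1) + 4 by ring, coeff_Q_add_four,
      show 2 * m + 1 + 3 = 2 * (m + 1) + 2 by ring, coeff_Q_two_mul_add_two,
      coeff_Q_eq_zero_of_lt (by omega) (by omega), ih]
    push_cast
    ring

theorem number_of_maximum_induced_hypercubes (n : ℕ) (hn : 2 ≤ n) :
    q n (n / 2) = if Even n then 2 else (n : ℤ) := by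
  obtain ⟨m, rfl⟩ := Nat.exists_eq_add_of_le' hn
  rcases Nat.even_or_odd' m with ⟨k, rfl | rfl⟩
  · have hdiv : (2 * k + 2) / 2 = k + 1 := by omega
    rw [q, hdiv, coeff_Q_two_mul_add_two, if_pos (by simp [parity_simps])]
  · have hdiv : (2 * k + 1 + 2) / 2 = k + 1 := by omega
    rw [q, hdiv, coeff_Q_two_mul_add_three, if_neg (by simp [parity_simps])]
    push_cast
    ring
end

section
/- For every n ≥ 2 and every k ≥ 0, h_{n,k} = C(k, 3k−n) + C(k+1, 3k+1−n), where C(a,b) is the binomial coefficient with the convention that C(a,b) = 0 when b < 0 or b > a. -/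
open Polynomial

/-- The maximal cube polynomials `H n` of the matchable Lucas cubes. -/
noncomputable def H : ℕ → Polynomial ℤ
  | 0 => 1
  | 1 => X
  | 2 => 2 * X
  | 3 => 3 * X
  | 4 => X + 2 * X ^ 2
  | (n + 5) => X * H (n + 3) + X * H (n + 2)

/-- `h n k` : the number of maximal `k`-dimensional cubes in `Ω_n`,
i.e. the coefficient of `x^k` in `H n`. -/
noncomputable def h (n k : ℕ) : ℤ := (H n).coeff k

/-!
Let `B n k = C k (3k - n) + C (k+1) (3k+1-n)`. Two applications of Pascal's rule give
`B (n+5) (k+1) = B (n+3) k + B (n+2) k`, which is the recursion `H (n+5) = X H (n+3) + X H (n+2)`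
read on the coefficient of `X^(k+1)`. Both sides vanish at `k = 0` once `n ≥ 5`, and they agree
for `H 2`, `H 3`, `H 4`, so they agree everywhere by strong induction on `n`.
-/

namespace C

lemma natCast (a c : ℕ) : C a c = a.choose c := by
  simp [_root_.C]

lemma of_neg {a : ℕ} {b : ℤ} (hb : b < 0) : C a b = 0 :=
  if_neg hb.not_ge

lemma of_lt {a : ℕ} {b : ℤ} (hb : a < b) : C a b = 0 := by
  lift b to ℕ using by omega
  rw [natCast, Nat.choose_eq_zero_of_lt (by omega), Nat.cast_zero]

lemma succ (a : ℕ) (b : ℤ) : C (a + 1) b = C a (b - 1) + C a b := by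
  obtain hb | rfl | hb := lt_trichotomy b 0
  · rw [of_neg hb, of_neg (by omega), of_neg hb, add_zero]
  · simp [_root_.C]
  · obtain ⟨c, rfl⟩ : ∃ c : ℕ, b = c + 1 := ⟨b.toNat - 1, by omega⟩
    rw [add_sub_cancel_right, ← Nat.cast_succ, natCast, natCast, natCast, Nat.choose_succ_succ,
      Nat.cast_add]

end C

def binomialSum (n k : ℕ) : ℤ := C k (3 * (k : ℤ) - n) + C (k + 1) (3 * (k : ℤ) + 1 - n)

lemma binomialSum_add_five_zero (n : ℕ) : binomialSum (n + 5) 0 = 0 := by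
  rw [binomialSum, C.of_neg (by omega), C.of_neg (by omega), add_zero]

lemma binomialSum_add_five_succ (n k : ℕ) :
    binomialSum (n + 5) (k + 1) = binomialSum (n + 3) k + binomialSum (n + 2) k := by
  have pascal₁ := C.succ (k + 1) (3 * (k : ℤ) - n - 1)
  have pascal₂ := C.succ k (3 * (k : ℤ) - n - 2)
  simp only [binomialSum, Nat.cast_add, Nat.cast_one, Nat.cast_ofNat] at *
  rw [show 3 * ((k : ℤ) + 1) + 1 - (n + 5) = 3 * k - n - 1 by ring, pascal₁,
    show 3 * ((k : ℤ) + 1) - (n + 5) = 3 * k - n - 2 by ring, pascal₂]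
  ring_nf

lemma h_add_five_zero (n : ℕ) : h (n + 5) 0 = 0 := by
  simp [h, H]

lemma h_add_five_succ (n k : ℕ) : h (n + 5) (k + 1) = h (n + 3) k + h (n + 2) k := by
  simp [h, H, coeff_X_mul]

lemma h_eq_binomialSum_of_le_four {n : ℕ} (hn₂ : 2 ≤ n) (hn₄ : n ≤ 4) (k : ℕ) :
    h n k = binomialSum n k := by
  rcases lt_or_ge k 3 with hk | hk
  · interval_cases n <;> interval_cases k <;>
      simp [h, H, binomialSum, _root_.C, coeff_X, coeff_X_pow, Nat.choose]
  · rw [binomialSum, C.of_lt (by omega), C.of_lt (by omega), add_zero]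
    interval_cases n <;> simp [h, H, coeff_X, coeff_X_pow] <;> omega

theorem h_eq_binomials (n : ℕ) (hn : 2 ≤ n) (k : ℕ) :
    h n k = C k (3 * (k : ℤ) - n) + C (k + 1) (3 * (k : ℤ) + 1 - n) := by
  induction n using Nat.strong_induction_on generalizing k with
  | _ n ih =>
  show h n k = binomialSum n k
  rcases Nat.lt_or_ge n 5 with hn₅ | hn₅
  · exact h_eq_binomialSum_of_le_four hn (by omega) k
  · obtain ⟨m, rfl⟩ := Nat.exists_eq_add_of_le' hn₅
    rcases k with _ | k
    · rw [h_add_five_zero, binomialSum_add_five_zero]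
    · rw [h_add_five_succ, binomialSum_add_five_succ, ih (m + 3) (by omega) (by omega),
        ih (m + 2) (by omega) (by omega)]
      rfl
end

section
/- Write n = 6m + b with 0 ≤ b ≤ 5. Then the number of indices k with h_{n,k} ≠ 0 (the number of terms of H_n) equals m+2 if b = 4, and equals m+1 otherwise. -/
open Polynomial

/-!
The coefficients of `H n` are nonnegative, so no cancellation occurs in the recurrence: the
support of `H (n + 5)` is the union of the supports of `H (n + 3)` and `H (n + 2)`, shifted by
one. By induction, for `n ≠ 1` this support is the whole interval `[⌊(n + 1) / 3⌋, ⌊n / 2⌋]`,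
whose length is read off from `n mod 6`.
-/

theorem coeff_H_add_five_succ (n k : ℕ) :
    (H (n + 5)).coeff (k + 1) = (H (n + 3)).coeff k + (H (n + 2)).coeff k := by
  simp only [H, coeff_add, coeff_X_mul]

theorem coeff_H_add_five_zero (n : ℕ) : (H (n + 5)).coeff 0 = 0 := by
  simp [H]

theorem coeff_H_nonneg : ∀ n k, 0 ≤ (H n).coeff k
  | 0, k | 1, k | 2, k | 3, k | 4, k => by
    simp only [H, coeff_add, coeff_one, coeff_X, coeff_ofNat_mul, coeff_X_pow]
    split_ifs <;> norm_num
  | n + 5, 0 => (coeff_H_add_five_zero n).ge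
  | n + 5, k + 1 => by
    rw [coeff_H_add_five_succ]
    exact add_nonneg (coeff_H_nonneg (n + 3) k) (coeff_H_nonneg (n + 2) k)

theorem coeff_H_pos_iff : ∀ n, n ≠ 1 → ∀ k, 0 < (H n).coeff k ↔ (n + 1) / 3 ≤ k ∧ k ≤ n / 2
  | 0, _, k | 2, _, k | 3, _, k | 4, _, k => by
    simp only [H, coeff_add, coeff_one, coeff_X, coeff_ofNat_mul, coeff_X_pow]
    split_ifs <;> norm_num <;> omega
  | n + 5, _, 0 => by simp [coeff_H_add_five_zero]
  | n + 5, _, k + 1 => by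
    have ih₁ := coeff_H_pos_iff (n + 3) (by omega) k
    have ih₂ := coeff_H_pos_iff (n + 2) (by omega) k
    have h₁ := coeff_H_nonneg (n + 3) k
    have h₂ := coeff_H_nonneg (n + 2) k
    rw [coeff_H_add_five_succ]
    omega

theorem support_H {n : ℕ} (hn : n ≠ 1) : (H n).support = Finset.Icc ((n + 1) / 3) (n / 2) := by
  ext k
  rw [mem_support_iff, Finset.mem_Icc, ← coeff_H_pos_iff n hn,
    (coeff_H_nonneg n k).lt_iff_ne', ne_comm]

/-- The number of terms of `H n`, i.e. the number of indices `k` with nonzero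
coefficient of `x^k` in `H n`. -/
theorem number_of_terms_of_H (m b : ℕ) (hb : b ≤ 5) :
    (H (6 * m + b)).support.card = if b = 4 then m + 2 else m + 1 := by
  by_cases h : 6 * m + b = 1
  · obtain ⟨rfl, rfl⟩ : m = 0 ∧ b = 1 := by omega
    simp [H]
  · rw [support_H h, Nat.card_Icc]
    split_ifs <;> omega
end
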